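/- arXiv:1303.3301 — 2 statements merged into one kernel-verified Lean document; each statement's English description precedes it below -/
import Mathlib

section
/- Let n, s be positive integers with s ≤ n. Then the maximum of min{(n−q)/p, (n−p)/q} over all integer pairs (p,q) with 1 ≤ p,q ≤ n and p + q ≥ n + s equals ⌊(n−s)/2⌋ / (⌊(n−s)/2⌋ + s). -/
/-!
Write `k = ⌊(n - s)/2⌋` and `f(a) = a/(a + s)`, which is increasing in `a ≥ 0`.
By symmetry let `q ≤ p` and put `a = n - p`. Then `q ≥ n + s - p = a + s`, so
`(n - p)/q ≤ f(a)`, and `2p ≥ p + q ≥ n + s` gives `a ≤ k`, hence the minimum is at most `f(k)`.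
The pair `p = n - k`, `q = k + s` attains it: its two ratios are `f(k)` and `f(n - k - s)`,
and `n - k - s ≥ k`.
-/

lemma div_add_le_div_add {K : Type*} [Field K] [LinearOrder K] [IsStrictOrderedRing K]
    {a b s : K} (ha : 0 ≤ a) (hs : 0 < s) (hab : a ≤ b) :
    a / (a + s) ≤ b / (b + s) := by
  rw [div_le_div_iff₀ (by linarith) (by linarith)]
  nlinarith

lemma sub_div_le_of_le {n s p q : ℕ} (hs : 0 < s) (hpn : p ≤ n) (hpq : n + s ≤ p + q)
    (hqp : q ≤ p) :
    ((n : ℝ) - p) / q ≤ (((n - s) / 2 : ℕ) : ℝ) / ((((n - s) / 2 : ℕ) : ℝ) + s) := by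
  have hq : n - p + s ≤ q := by omega
  have hk : n - p ≤ (n - s) / 2 := by omega
  rw [← Nat.cast_sub hpn]
  calc ((n - p : ℕ) : ℝ) / q ≤ (n - p : ℕ) / ((n - p : ℕ) + s) :=
        div_le_div_of_nonneg_left (by positivity) (by positivity) (by exact_mod_cast hq)
    _ ≤ _ := div_add_le_div_add (by positivity) (by exact_mod_cast hs) (by exact_mod_cast hk)

lemma min_sub_div_balanced {n s : ℕ} (hs : 0 < s) (hsn : s ≤ n) :
    min (((n : ℝ) - ((n - s) / 2 + s : ℕ)) / (n - (n - s) / 2 : ℕ))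
        (((n : ℝ) - (n - (n - s) / 2 : ℕ)) / ((n - s) / 2 + s : ℕ)) =
      (((n - s) / 2 : ℕ) : ℝ) / ((((n - s) / 2 : ℕ) : ℝ) + s) := by
  set k := (n - s) / 2
  have hkm : k ≤ n - k - s := by omega
  have hq : (n : ℝ) - (k + s : ℕ) = (n - k - s : ℕ) := by
    rw [Nat.cast_sub (by omega), Nat.cast_sub (by omega), Nat.cast_add]; ring
  have hp : ((n - k : ℕ) : ℝ) = (n - k - s : ℕ) + s := by
    rw [← Nat.cast_add, Nat.sub_add_cancel (by omega)]
  have hnp : (n : ℝ) - (n - k : ℕ) = k := by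
    rw [Nat.cast_sub (by omega)]; ring
  rw [hq, hnp, hp, Nat.cast_add, min_eq_right]
  exact div_add_le_div_add (by positivity) (by exact_mod_cast hs) (by exact_mod_cast hkm)

theorem stmt3_general (n s : ℕ) (hs : 1 ≤ s) (hsn : s ≤ n) :
    IsGreatest
      {x : ℝ | ∃ p q : ℕ, 1 ≤ p ∧ p ≤ n ∧ 1 ≤ q ∧ q ≤ n ∧ n + s ≤ p + q ∧
        x = min (((n : ℝ) - q) / p) (((n : ℝ) - p) / q)}
      ((((n - s) / 2 : ℕ) : ℝ) / ((((n - s) / 2 : ℕ) : ℝ) + s)) := by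
  refine ⟨⟨n - (n - s) / 2, (n - s) / 2 + s, by omega, by omega, by omega, by omega, by omega,
    (min_sub_div_balanced hs hsn).symm⟩, ?_⟩
  rintro x ⟨p, q, -, hpn, -, hqn, hpq, rfl⟩
  rcases le_total q p with hqp | hpq'
  · exact (min_le_right _ _).trans (sub_div_le_of_le hs hpn hpq hqp)
  · exact (min_le_left _ _).trans (sub_div_le_of_le hs hqn (by omega) hpq')

/-- The maximum of `min{(n−q)/p, (n−p)/q}` over integer pairs `(p,q)` with
`1 ≤ p, q ≤ n` and `p + q ≥ n + s` equals `⌊(n−s)/2⌋/(⌊(n−s)/2⌋+s)`. -/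
theorem stmt3 (n s : ℕ) (hn : 1 ≤ n) (hs : 1 ≤ s) (hsn : s ≤ n) :
    IsGreatest
      {x : ℝ | ∃ p q : ℕ, 1 ≤ p ∧ p ≤ n ∧ 1 ≤ q ∧ q ≤ n ∧ n + s ≤ p + q ∧
        x = min (((n : ℝ) - q) / p) (((n : ℝ) - p) / q)}
      ((((n - s) / 2 : ℕ) : ℝ) / ((((n - s) / 2 : ℕ) : ℝ) + s)) :=
  stmt3_general n s hs hsn
end

section
/- Let u be a (p,q)-form on ℂⁿ (an alternating tensor with p holomorphic and q antiholomorphic indices), and let (φ_{i\bar j}) be Hermitian positive with eigenvalues λ₁ ≤ … ≤ λₙ. Define T(u,u) = ⟨[φ, Λ_ω]u, u⟩ where Λ_ω is the contraction with the standard Kähler form of ℂⁿ. Then T(u,u) ≥ max{pλ₁ − (n−q)λₙ, qλ₁ − (n−p)λₙ}·|u|². In coordinates diagonalizing φ with eigenvalues λ₁,…,λₙ, this reads: for any family (u_{I\bar{J}}) alternating in I = (i₁<…<i_p) and J = (j₁<…<j_q), ∑_{I,J} (∑_{i∈I} λ_i + ∑_{j∈J} λ_j − ∑_{i=1}^n λ_i)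 |u_{I\bar J}|² ≥ max{pλ₁ − (n−q)λₙ, qλ₁ − (n−p)λₙ} · ∑_{I,J}|u_{I\bar J}|². -/
open Finset

/-! The coefficient of `|u_{IJ̄}|²` equals `∑_{i∈I} λ_i - ∑_{j∉J} λ_j`, which is at least
`|I| λ₁ - (n - |J|) λₙ`; by symmetry it is also at least `|J| λ₁ - (n - |I|) λₙ`. The
inequality therefore holds term by term. -/

lemma card_mul_sub_le_sum_add_sum_sub_sum {ι : Type*} [Fintype ι] {f : ι → ℝ} {a b : ℝ}
    (ha : ∀ i, a ≤ f i) (hb : ∀ i, f i ≤ b) (I J : Finset ι) :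
    #I * a - (Fintype.card ι - #J) * b ≤ ∑ i ∈ I, f i + ∑ j ∈ J, f j - ∑ i, f i := by
  classical
  have hI : #I • a ≤ ∑ i ∈ I, f i := card_nsmul_le_sum I f a fun i _ => ha i
  have hJc : ∑ i ∈ Jᶜ, f i ≤ #Jᶜ • b := sum_le_card_nsmul Jᶜ f b fun i _ => hb i
  have hsplit : ∑ i ∈ Jᶜ, f i + ∑ j ∈ J, f j = ∑ i, f i := sum_compl_add_sum J f
  have hcard : (#Jᶜ : ℝ) = Fintype.card ι - #J := by
    rw [eq_sub_iff_add_eq, add_comm]; exact_mod_cast card_add_card_compl J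
  rw [nsmul_eq_mul] at hI
  rw [nsmul_eq_mul, hcard] at hJc
  linarith

/-- Coordinate version of the curvature estimate for the operator `[φ, Λ_ω]`:
for real eigenvalues `0 ≤ λ₁ ≤ … ≤ λₙ` (given by a monotone function `lam`) and any
family of complex coefficients `u I J` indexed by `p`-element subsets `I` and
`q`-element subsets `J` of `{1,…,n}`,
`∑_{I,J} (∑_{i∈I} λ_i + ∑_{j∈J} λ_j − ∑_i λ_i) |u_{IJ̄}|²
  ≥ max{pλ₁ − (n−q)λₙ, qλ₁ − (n−p)λₙ} ∑_{I,J} |u_{IJ̄}|²`. -/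
theorem stmt12 (n p q : ℕ) (hn : 0 < n)
    (lam : Fin n → ℝ) (hmono : Monotone lam)
    (u : Finset (Fin n) → Finset (Fin n) → ℂ) :
    ∑ I ∈ Finset.univ.powersetCard p, ∑ J ∈ Finset.univ.powersetCard q,
        ((∑ i ∈ I, lam i) + (∑ j ∈ J, lam j) - ∑ i, lam i) * ‖u I J‖ ^ 2 ≥
      max ((p : ℝ) * lam ⟨0, hn⟩ - ((n : ℝ) - q) * lam ⟨n - 1, by omega⟩)
          ((q : ℝ) * lam ⟨0, hn⟩ - ((n : ℝ) - p) * lam ⟨n - 1, by omega⟩) *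
        ∑ I ∈ Finset.univ.powersetCard p, ∑ J ∈ Finset.univ.powersetCard q,
          ‖u I J‖ ^ 2 := by
  have hlo : ∀ i, lam ⟨0, hn⟩ ≤ lam i := fun i => hmono (Fin.mk_le_of_le_val i.val.zero_le)
  have hhi : ∀ i, lam i ≤ lam ⟨n - 1, by omega⟩ := 
    fun i => hmono (Fin.le_iff_val_le_val.2 (Nat.le_sub_one_of_lt i.isLt))
  rw [ge_iff_le, mul_sum]
  refine sum_le_sum fun I hI => ?_
  rw [mul_sum]
  refine sum_le_sum fun J hJ => ?_
  rw [mem_powersetCard] at hI hJ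
  have hIJ := card_mul_sub_le_sum_add_sum_sub_sum hlo hhi I J
  have hJI := card_mul_sub_le_sum_add_sum_sub_sum hlo hhi J I
  rw [hI.2, hJ.2, Fintype.card_fin] at hIJ hJI
  gcongr
  exact max_le hIJ (by linarith)
end
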